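/- Let α = [0; a₁, a₂, …] ∈ (0,1) be irrational with (aₙ) unbounded, and let (qₙ) be the sequence of denominators of the convergents of α. Then t^s_{(qₙ)}(𝕋) strictly contains t_{(qₙ)}(𝕋), i.e., there exists β ∈ 𝕋 with qₙβ → 0 statistically in 𝕋 but qₙβ ↛ 0 in 𝕋. -/

import Mathlib

open Filter Topology

noncomputable section

/-- The circle group `𝕋 = ℝ/ℤ`. -/
abbrev Circle1 : Type := AddCircle (1 : ℝ)

/-- A set of naturals has natural density zero. -/
def DensityZero (A : Set ℕ) : Prop :=
  Tendsto (fun n : ℕ => ((A ∩ Set.Icc 1 n).ncard : ℝ) / n) atTop (𝓝 0)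

/-- Statistical convergence to `0` of a sequence in the circle. -/
def StatTendstoZero (x : ℕ → Circle1) : Prop :=
  ∀ ε : ℝ, 0 < ε → DensityZero {n : ℕ | ε ≤ ‖x n‖}

/-- The characterized subgroup `t_(a_n)(𝕋)`. -/
def charSet (a : ℕ → ℤ) : Set Circle1 :=
  {x : Circle1 | Tendsto (fun n : ℕ => a n • x) atTop (𝓝 0)}

/-- The statistically characterized subgroup `t^s_(a_n)(𝕋)`. -/
def statCharSet (a : ℕ → ℤ) : Set Circle1 :=
  {x : Circle1 | StatTendstoZero (fun n : ℕ => a n • x)}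

namespace CF

/-- Gauss-map orbit of `α`: `G α 0 = α`, `G α (n+1) = {1 / G α n}`. -/
def G (α : ℝ) : ℕ → ℝ
  | 0 => α
  | n + 1 => Int.fract (G α n)⁻¹

/-- The partial quotients of the regular continued fraction `α = [0; a 1, a 2, …]`
(with the convention `a 0 = 0`). -/
def a (α : ℝ) : ℕ → ℕ
  | 0 => 0
  | n + 1 => ⌊(G α n)⁻¹⌋₊

/-- Denominators of the convergents of the continued fraction of `α`. -/
def q (α : ℝ) : ℕ → ℕ
  | 0 => 1
  | 1 => a α 1
  | (n + 2) => a α (n + 2) * q α (n + 1) + q α n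

/-- Numerators of the convergents of the continued fraction of `α`. -/
def p (α : ℝ) : ℕ → ℕ
  | 0 => 0
  | 1 => 1
  | (n + 2) => a α (n + 2) * p α (n + 1) + p α n

/-- `θ n = q n * α - p n`. -/
def θ (α : ℝ) (n : ℕ) : ℝ := (q α n : ℝ) * α - (p α n : ℝ)

end CF

open CF

/-!
Write `θₙ = qₙα - pₙ`, so that `qₙ₊₁|θₙ| < 1 ≤ (qₙ₊₁ + qₙ)|θₙ|` and `qₙθᵣ ≡ qᵣθₙ (mod 1)`.
Choose indices `r₀ < r₁ < ⋯` with gaps at least `8`, `r_k ≥ 2^k` and `a_{r_k+1} ≥ 10`, and put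
`β = ∑ₖ ⌊a_{r_k+1}/2⌋ θ_{r_k}`. The `k`-th summand of `qₙβ` has circle norm at most
`qₙ/(2q_{r_k})` and at most `q_{r_k+1}|θₙ|/2`; as the `qₙ` grow geometrically, `‖qₙβ‖ ≤ 2^{1-W}`
whenever `n` is at distance more than `2W` from every `r_k`, and since `r_k ≥ 2^k` the remaining
`n` form a set of density zero. At `n = r_j`, however, the `j`-th summand has norm at least `3/8`
while the others add up to at most `1/8`, so `‖q_{r_j}β‖ ≥ 1/4`.
-/

theorem DensityZero.mono {A B : Set ℕ} (h : A ⊆ B) (hB : DensityZero B) : DensityZero A := by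
  refine squeeze_zero (fun n => by positivity) (fun n => ?_) hB
  gcongr
  exact (Set.finite_Icc 1 n).inter_of_right B

theorem ncard_iUnion_Icc_inter_Icc_le {r : ℕ → ℕ} (hr : ∀ k, 2 ^ k ≤ r k) (W N : ℕ) :
    ((⋃ k, Set.Icc (r k - W) (r k + W)) ∩ Set.Icc 1 N).ncard
      ≤ (Nat.log 2 (N + W) + 1) * (2 * W + 1) := by
  let F := (Finset.range (Nat.log 2 (N + W) + 1)).biUnion fun k => Finset.Icc (r k - W) (r k + W)
  have hsub : (⋃ k, Set.Icc (r k - W) (r k + W)) ∩ Set.Icc 1 N ⊆ F := by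
    rintro x ⟨hx, hxN⟩
    obtain ⟨k, hk⟩ := Set.mem_iUnion.1 hx
    simp only [Set.mem_Icc] at hk hxN
    have : k ≤ Nat.log 2 (N + W) := Nat.le_log_of_pow_le one_lt_two (by have := hr k; omega)
    simp only [F, Finset.coe_biUnion, Set.mem_iUnion, Finset.mem_coe, Finset.mem_Icc,
      Finset.mem_range]
    exact ⟨k, by omega, hk⟩
  calc _ ≤ F.card := by simpa using Set.ncard_le_ncard hsub F.finite_toSet
    _ ≤ ∑ k ∈ Finset.range (Nat.log 2 (N + W) + 1), (Finset.Icc (r k - W) (r k + W)).card :=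
      Finset.card_biUnion_le
    _ ≤ ∑ k ∈ Finset.range (Nat.log 2 (N + W) + 1), (2 * W + 1) :=
      Finset.sum_le_sum fun k _ => by rw [Nat.card_Icc]; omega
    _ = _ := by simp

theorem tendsto_natLog_add_div_atTop (W : ℕ) :
    Tendsto (fun N : ℕ => (Nat.log 2 (N + W) : ℝ) / N) atTop (𝓝 0) := by
  have hlog : Tendsto (fun N : ℕ => Real.log (N + W) / N) atTop (𝓝 0) := by
    have := (Real.tendsto_pow_log_div_mul_add_atTop 1 (-W) 1 one_ne_zero).comp
      (tendsto_atTop_add_const_right _ (W : ℝ) tendsto_natCast_atTop_atTop)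
    refine this.congr fun N => ?_
    simp
  have hlogb : Tendsto (fun N : ℕ => Real.logb 2 (N + W) / N) atTop (𝓝 0) := by
    simpa [Real.logb, div_right_comm] using hlog.div_const (Real.log 2)
  refine squeeze_zero (fun N => by positivity) (fun N => ?_) hlogb
  gcongr
  exact_mod_cast Real.natLog_le_logb (N + W) 2

theorem densityZero_iUnion_Icc {r : ℕ → ℕ} (hr : ∀ k, 2 ^ k ≤ r k) (W : ℕ) :
    DensityZero (⋃ k, Set.Icc (r k - W) (r k + W)) := by
  have hlim : Tendsto (fun N : ℕ => ((Nat.log 2 (N + W) : ℝ) / N + 1 / N) * (2 * W + 1))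
      atTop (𝓝 0) := by
    simpa using ((tendsto_natLog_add_div_atTop W).add
      tendsto_one_div_atTop_nhds_zero_nat).mul_const ((2 : ℝ) * W + 1)
  refine squeeze_zero (fun N => by positivity) (fun N => ?_) hlim
  rw [← add_div, div_mul_eq_mul_div]
  gcongr
  exact_mod_cast ncard_iUnion_Icc_inter_Icc_le hr W N

theorem le_geometric_of_two_mul_le {u : ℕ → ℝ} (hu : ∀ k, 2 * u (k + 1) ≤ u k) (k : ℕ) :
    u k ≤ u 0 * (1 / 2) ^ k := by
  induction k with
  | zero => simp
  | succ k ih => rw [pow_succ]; linarith [hu k]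

theorem summable_of_two_mul_le {u : ℕ → ℝ} (h0 : ∀ k, 0 ≤ u k)
    (hu : ∀ k, 2 * u (k + 1) ≤ u k) : Summable u :=
  .of_nonneg_of_le h0 (le_geometric_of_two_mul_le hu)
    ((summable_geometric_two).mul_left (u 0))

theorem tsum_le_two_mul_of_two_mul_le {u : ℕ → ℝ} (h0 : ∀ k, 0 ≤ u k)
    (hu : ∀ k, 2 * u (k + 1) ≤ u k) : ∑' k, u k ≤ 2 * u 0 := by
  calc ∑' k, u k ≤ ∑' k, u 0 * (1 / 2 : ℝ) ^ k :=
        (summable_of_two_mul_le h0 hu).tsum_le_tsum (le_geometric_of_two_mul_le hu)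
          ((summable_geometric_two).mul_left (u 0))
    _ = 2 * u 0 := by rw [tsum_mul_left, tsum_geometric_two, mul_comm]

theorem sum_range_succ_le_two_mul_of_two_mul_le {v : ℕ → ℝ} (h0 : 0 ≤ v 0)
    (hv : ∀ k, 2 * v k ≤ v (k + 1)) (K : ℕ) : ∑ k ∈ Finset.range (K + 1), v k ≤ 2 * v K := by
  induction K with
  | zero => rw [Finset.sum_range_one]; linarith
  | succ K ih => rw [Finset.sum_range_succ]; linarith [hv K]

theorem norm_coe_le_abs (x : ℝ) : ‖(x : Circle1)‖ ≤ |x| :=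
  QuotientAddGroup.norm_mk_le_norm

namespace CF

variable {α : ℝ}

theorem G_mem_Ioo (hα : α ∈ Set.Ioo (0 : ℝ) 1) (hirr : Irrational α) (n : ℕ) :
    G α n ∈ Set.Ioo (0 : ℝ) 1 := by
  suffices G α n ∈ Set.Ioo (0 : ℝ) 1 ∧ Irrational (G α n) from this.1
  induction n with
  | zero => exact ⟨hα, hirr⟩
  | succ n ih =>
    have hirr' : Irrational (G α (n + 1)) := ih.2.inv.sub_intCast ⌊(G α n)⁻¹⌋
    exact ⟨⟨(Int.fract_nonneg _).lt_of_ne fun h => hirr'.ne_zero h.symm, Int.fract_lt_one _⟩,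
      hirr'⟩

theorem inv_G_eq (hG : ∀ n, G α n ∈ Set.Ioo (0 : ℝ) 1) (n : ℕ) :
    (G α n)⁻¹ = a α (n + 1) + G α (n + 1) := by
  rw [a, natCast_floor_eq_intCast_floor (inv_nonneg.2 (hG n).1.le), G, Int.floor_add_fract]

theorem one_le_a (hG : ∀ n, G α n ∈ Set.Ioo (0 : ℝ) 1) (n : ℕ) : 1 ≤ a α (n + 1) :=
  Nat.le_floor (by simpa using ((one_lt_inv₀ (hG n).1).2 (hG n).2).le)

theorem q_add_two (n : ℕ) : q α (n + 2) = a α (n + 2) * q α (n + 1) + q α n := rfl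

theorem p_add_two (n : ℕ) : p α (n + 2) = a α (n + 2) * p α (n + 1) + p α n := rfl

/-- This product is `|θ α n|` (`abs_θ`). -/
def T (α : ℝ) (n : ℕ) : ℝ := ∏ i ∈ Finset.range (n + 1), G α i

theorem T_zero : T α 0 = α := by simp [T, G]

theorem T_succ (n : ℕ) : T α (n + 1) = T α n * G α (n + 1) := Finset.prod_range_succ _ _

theorem T_pos (hG : ∀ n, G α n ∈ Set.Ioo (0 : ℝ) 1) (n : ℕ) : 0 < T α n :=
  Finset.prod_pos fun i _ => (hG i).1

theorem T_succ_lt (hG : ∀ n, G α n ∈ Set.Ioo (0 : ℝ) 1) (n : ℕ) : T α (n + 1) < T α n := by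
  rw [T_succ]
  exact mul_lt_of_lt_one_right (T_pos hG n) (hG (n + 1)).2

theorem T_one (hG : ∀ n, G α n ∈ Set.Ioo (0 : ℝ) 1) : T α 1 = 1 - a α 1 * α := by
  have h := inv_G_eq hG 0
  have hα : α ≠ 0 := (hG 0).1.ne'
  rw [show G α 0 = α from rfl] at h
  field_simp at h
  rw [T_succ, T_zero]
  linarith

theorem T_add_two (hG : ∀ n, G α n ∈ Set.Ioo (0 : ℝ) 1) (n : ℕ) :
    T α (n + 2) = T α n - a α (n + 2) * T α (n + 1) := by
  have h := inv_G_eq hG (n + 1)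
  have hG1 : G α (n + 1) ≠ 0 := (hG (n + 1)).1.ne'
  rw [T_succ, T_succ, ← sub_eq_of_eq_add h]
  field_simp
  ring

theorem θ_eq (hG : ∀ n, G α n ∈ Set.Ioo (0 : ℝ) 1) (n : ℕ) : θ α n = (-1) ^ n * T α n := by
  induction n using Nat.twoStepInduction with
  | zero => simp [θ, q, p, T_zero]
  | one => simp [θ, q, p, T_one hG]
  | more n ih₀ ih₁ =>
    have hrec : θ α (n + 2) = a α (n + 2) * θ α (n + 1) + θ α n := by
      simp only [θ, q_add_two, p_add_two]; push_cast; ring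
    rw [hrec, ih₀, ih₁, T_add_two hG]
    ring

theorem abs_θ (hG : ∀ n, G α n ∈ Set.Ioo (0 : ℝ) 1) (n : ℕ) : |θ α n| = T α n := by
  simp [θ_eq hG, abs_of_pos (T_pos hG n)]

theorem q_succ_mul_T_add_q_mul_T_succ (hG : ∀ n, G α n ∈ Set.Ioo (0 : ℝ) 1) (n : ℕ) :
    (q α (n + 1) : ℝ) * T α n + q α n * T α (n + 1) = 1 := by
  induction n with
  | zero => simp [q, T_zero, T_one hG]
  | succ n ih =>
    rw [T_add_two hG, q_add_two]
    push_cast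
    linear_combination ih

theorem one_le_q (hG : ∀ n, G α n ∈ Set.Ioo (0 : ℝ) 1) (n : ℕ) : 1 ≤ q α n := by
  induction n using Nat.twoStepInduction with
  | zero => simp [q]
  | one => exact one_le_a hG 0
  | more n ih₀ _ => exact ih₀.trans (Nat.le_add_left _ _)

theorem q_le_q_succ (hG : ∀ n, G α n ∈ Set.Ioo (0 : ℝ) 1) (n : ℕ) : q α n ≤ q α (n + 1) := by
  cases n with
  | zero => exact one_le_a hG 0
  | succ n =>
    show q α (n + 1) ≤ a α (n + 2) * q α (n + 1) + q α n
    nlinarith [one_le_a hG (n + 1)]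

theorem q_mono (hG : ∀ n, G α n ∈ Set.Ioo (0 : ℝ) 1) : Monotone (q α) :=
  monotone_nat_of_le_succ (q_le_q_succ hG)

theorem two_pow_mul_q_le (hG : ∀ n, G α n ∈ Set.Ioo (0 : ℝ) 1) (k n : ℕ) :
    2 ^ k * q α n ≤ q α (n + 2 * k) := by
  induction k with
  | zero => simp
  | succ k ih =>
    have := q_le_q_succ hG (n + 2 * k)
    rw [show n + 2 * (k + 1) = n + 2 * k + 2 by ring, q_add_two, pow_succ]
    nlinarith [one_le_a hG (n + 2 * k + 1)]

theorem a_mul_q_le (n : ℕ) : a α (n + 1) * q α n ≤ q α (n + 1) := by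
  cases n with
  | zero => simp [q]
  | succ n => exact Nat.le_add_right _ _

theorem q_succ_le (hG : ∀ n, G α n ∈ Set.Ioo (0 : ℝ) 1) (n : ℕ) :
    q α (n + 1) ≤ (a α (n + 1) + 1) * q α n := by
  cases n with
  | zero => simp [q]
  | succ n =>
    show a α (n + 2) * q α (n + 1) + q α n ≤ (a α (n + 2) + 1) * q α (n + 1)
    nlinarith [q_le_q_succ hG n]

theorem q_succ_mul_T_lt_one (hG : ∀ n, G α n ∈ Set.Ioo (0 : ℝ) 1) (n : ℕ) :
    (q α (n + 1) : ℝ) * T α n < 1 := by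
  have hq : (1 : ℝ) ≤ q α n := by exact_mod_cast one_le_q hG n
  nlinarith [q_succ_mul_T_add_q_mul_T_succ hG n, T_pos hG (n + 1)]

theorem one_le_q_add_q_mul_T (hG : ∀ n, G α n ∈ Set.Ioo (0 : ℝ) 1) (n : ℕ) :
    1 ≤ ((q α (n + 1) : ℝ) + q α n) * T α n := by
  have hq : (0 : ℝ) ≤ q α n := Nat.cast_nonneg _
  nlinarith [q_succ_mul_T_add_q_mul_T_succ hG n, T_succ_lt hG n]

theorem coe_mul_q_mul_θ_comm (b : ℤ) (n r : ℕ) :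
    ((b * (q α n * θ α r) : ℝ) : Circle1) = ((b * (q α r * θ α n) : ℝ) : Circle1) := by
  rw [← sub_eq_zero, ← AddCircle.coe_sub, AddCircle.coe_eq_zero_iff]
  refine ⟨b * (q α r * p α n - q α n * p α r), ?_⟩
  simp only [θ, zsmul_eq_mul, mul_one]
  push_cast
  ring

theorem two_mul_q_le_of_add_two_le (hG : ∀ n, G α n ∈ Set.Ioo (0 : ℝ) 1) {m n : ℕ}
    (h : m + 2 ≤ n) : 2 * q α m ≤ q α n := by
  simpa using (two_pow_mul_q_le hG 1 m).trans (q_mono hG h)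

theorem two_mul_half_a_mul_q_le (r : ℕ) : 2 * (a α (r + 1) / 2) * q α r ≤ q α (r + 1) :=
  (Nat.mul_le_mul_right _ (Nat.mul_div_le _ 2)).trans (a_mul_q_le r)

def scaledθ (α : ℝ) (r : ℕ) : ℝ := ((a α (r + 1) / 2 : ℕ) : ℝ) * θ α r

theorem two_mul_q_mul_abs_scaledθ_lt_one (hG : ∀ n, G α n ∈ Set.Ioo (0 : ℝ) 1) (r : ℕ) :
    2 * q α r * |scaledθ α r| < 1 := by
  have hb : (2 * ((a α (r + 1) / 2 : ℕ) : ℝ) * q α r : ℝ) ≤ q α (r + 1) := by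
    exact_mod_cast two_mul_half_a_mul_q_le r
  rw [scaledθ, abs_mul, Nat.abs_cast, abs_θ hG]
  nlinarith [q_succ_mul_T_lt_one hG r, T_pos hG r]

theorem abs_q_mul_scaledθ_le (hG : ∀ n, G α n ∈ Set.Ioo (0 : ℝ) 1) (n r : ℕ) :
    |q α n * scaledθ α r| ≤ q α n / (2 * q α r) := by
  have hq : (0 : ℝ) < q α r := by exact_mod_cast one_le_q hG r
  rw [abs_mul, Nat.abs_cast, le_div_iff₀ (by positivity)]
  nlinarith [two_mul_q_mul_abs_scaledθ_lt_one hG r, (Nat.cast_nonneg (q α n) : (0 : ℝ) ≤ _)]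

theorem norm_coe_q_mul_scaledθ_le (hG : ∀ n, G α n ∈ Set.Ioo (0 : ℝ) 1) (n r : ℕ) :
    ‖((q α n * scaledθ α r : ℝ) : Circle1)‖ ≤ q α (r + 1) * T α n / 2 := by
  have hb : (2 * ((a α (r + 1) / 2 : ℕ) : ℝ) * q α r : ℝ) ≤ q α (r + 1) := by
    exact_mod_cast two_mul_half_a_mul_q_le r
  have h : (q α n : ℝ) * scaledθ α r = ((a α (r + 1) / 2 : ℕ) : ℤ) * (q α n * θ α r) := by
    rw [scaledθ, Int.cast_natCast]; ring
  rw [h, coe_mul_q_mul_θ_comm]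
  refine (norm_coe_le_abs _).trans ?_
  rw [abs_mul, abs_mul, abs_θ hG, Int.cast_natCast, Nat.abs_cast, Nat.abs_cast]
  nlinarith [T_pos hG n]

theorem three_eighths_le_norm_coe_q_mul_scaledθ (hG : ∀ n, G α n ∈ Set.Ioo (0 : ℝ) 1) {r : ℕ}
    (ha : 10 ≤ a α (r + 1)) : 3 / 8 ≤ ‖((q α r * scaledθ α r : ℝ) : Circle1)‖ := by
  have hA : (10 : ℝ) ≤ a α (r + 1) := by exact_mod_cast ha
  have hbA : 2 * ((a α (r + 1) / 2 : ℕ) : ℝ) ≤ a α (r + 1) := by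
    exact_mod_cast Nat.mul_div_le (a α (r + 1)) 2
  have hAb : (a α (r + 1) : ℝ) ≤ 2 * ((a α (r + 1) / 2 : ℕ) : ℝ) + 1 := by norm_cast; omega
  have hx : 0 < (q α r : ℝ) * T α r := mul_pos (by exact_mod_cast one_le_q hG r) (T_pos hG r)
  have hAx : (a α (r + 1) : ℝ) * (q α r * T α r) < 1 := by
    have : (a α (r + 1) * q α r : ℝ) ≤ q α (r + 1) := by exact_mod_cast a_mul_q_le r
    nlinarith [q_succ_mul_T_lt_one hG r, T_pos hG r]
  have hxA : 1 ≤ ((a α (r + 1) : ℝ) + 2) * (q α r * T α r) := by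
    have : (q α (r + 1) : ℝ) ≤ (a α (r + 1) + 1) * q α r := by exact_mod_cast q_succ_le hG r
    nlinarith [one_le_q_add_q_mul_T hG r, T_pos hG r]
  have habs : |(q α r : ℝ) * scaledθ α r| = ((a α (r + 1) / 2 : ℕ) : ℝ) * (q α r * T α r) := by
    rw [scaledθ, abs_mul, abs_mul, abs_θ hG, Nat.abs_cast, Nat.abs_cast]; ring
  rw [(AddCircle.norm_coe_eq_abs_iff 1 one_ne_zero).2 (by rw [habs]; norm_num; nlinarith), habs]
  nlinarith

structure IsLacunary (α : ℝ) (r : ℕ → ℕ) : Prop where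
  ten_le_a : ∀ k, 10 ≤ a α (r k + 1)
  add_eight_le : ∀ k, r k + 8 ≤ r (k + 1)
  two_pow_le : ∀ k, 2 ^ k ≤ r k

theorem exists_isLacunary (hunb : ∀ M : ℕ, ∃ n : ℕ, M < a α n) : ∃ r, IsLacunary α r := by
  have hpick : ∀ N, ∃ n, N ≤ n ∧ 10 ≤ a α (n + 1) := by
    intro N
    obtain ⟨n, hn⟩ := hunb (max 10 ((Finset.range (N + 1)).sup (a α)))
    have hN : N + 1 ≤ n := by
      by_contra h
      exact (Finset.le_sup (Finset.mem_range.2 (by omega))).not_gt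
        ((le_max_right _ _).trans_lt hn)
    refine ⟨n - 1, by omega, ?_⟩
    rw [Nat.sub_add_cancel (by omega)]
    exact (le_max_left _ _).trans hn.le
  choose pick hpick_ge hpick_a using hpick
  let r : ℕ → ℕ := fun k => Nat.rec (pick 1) (fun k rk => pick (max (rk + 8) (2 ^ (k + 1)))) k
  refine ⟨r, fun k => ?_, fun k => (le_max_left _ _).trans (hpick_ge _), fun k => ?_⟩
  · cases k <;> exact hpick_a _
  · cases k with
    | zero => exact hpick_ge 1
    | succ k => exact (le_max_right _ _).trans (hpick_ge _)

def beta (α : ℝ) (r : ℕ → ℕ) : ℝ := ∑' k, scaledθ α (r k)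

namespace IsLacunary

variable {r : ℕ → ℕ}

theorem add_eight_le_of_lt (hr : IsLacunary α r) {j k : ℕ} (h : j < k) : r j + 8 ≤ r k := by
  induction k with
  | zero => omega
  | succ k ih =>
    rcases Nat.lt_succ_iff_lt_or_eq.1 h with h | rfl
    · linarith [hr.add_eight_le k, ih h]
    · exact hr.add_eight_le j

theorem strictMono (hr : IsLacunary α r) : StrictMono r :=
  fun _ _ h => by linarith [hr.add_eight_le_of_lt h]

theorem two_mul_div_q_le (hG : ∀ n, G α n ∈ Set.Ioo (0 : ℝ) 1) (hr : IsLacunary α r)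
    {x : ℝ} (hx : 0 ≤ x) (k : ℕ) :
    2 * (x / (2 * q α (r (k + 1)))) ≤ x / (2 * q α (r k)) := by
  have hq : (0 : ℝ) < q α (r k) := by exact_mod_cast one_le_q hG _
  have h2 : (2 * q α (r k) : ℝ) ≤ q α (r (k + 1)) := by
    exact_mod_cast two_mul_q_le_of_add_two_le hG (by linarith [hr.add_eight_le k])
  rw [mul_div_assoc', div_le_div_iff₀ (by linarith) (by positivity)]
  nlinarith

theorem summable_scaledθ (hG : ∀ n, G α n ∈ Set.Ioo (0 : ℝ) 1) (hr : IsLacunary α r) :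
    Summable fun k => scaledθ α (r k) := by
  refine .of_norm_bounded (summable_of_two_mul_le (u := fun k => 1 / (2 * (q α (r k) : ℝ)))
    (fun k => by positivity)
    (hr.two_mul_div_q_le hG zero_le_one)) fun k => ?_
  simpa [q] using abs_q_mul_scaledθ_le hG 0 (r k)

theorem abs_tsum_q_mul_scaledθ_le (hG : ∀ n, G α n ∈ Set.Ioo (0 : ℝ) 1) (hr : IsLacunary α r)
    {n K W : ℕ} (h : n + 2 * W ≤ r K) :
    |∑' k, q α n * scaledθ α (r (k + K))| ≤ (1 / 2) ^ W := by
  set u : ℕ → ℝ := fun k => q α n / (2 * q α (r (k + K)))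
  have hu0 : ∀ k, 0 ≤ u k := fun k => by positivity
  have hu : ∀ k, 2 * u (k + 1) ≤ u k := fun k => by
    simpa only [u, add_right_comm k 1 K] using hr.two_mul_div_q_le hG (Nat.cast_nonneg _) (k + K)
  have hsum : Summable fun k => ‖q α n * scaledθ α (r (k + K))‖ :=
    (((summable_nat_add_iff K).2 (hr.summable_scaledθ hG)).mul_left _).norm
  have hqK : (0 : ℝ) < q α (r K) := by exact_mod_cast one_le_q hG _
  have hgrowth : (2 ^ W * q α n : ℝ) ≤ q α (r K) := by
    exact_mod_cast (two_pow_mul_q_le hG W n).trans (q_mono hG h)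
  calc |∑' k, q α n * scaledθ α (r (k + K))|
      = ‖∑' k, q α n * scaledθ α (r (k + K))‖ := (Real.norm_eq_abs _).symm
    _ ≤ ∑' k, ‖q α n * scaledθ α (r (k + K))‖ := norm_tsum_le_tsum_norm hsum
    _ ≤ ∑' k, u k := hsum.tsum_le_tsum
        (fun k => (Real.norm_eq_abs _).trans_le (abs_q_mul_scaledθ_le hG n _))
        (summable_of_two_mul_le hu0 hu)
    _ ≤ 2 * u 0 := tsum_le_two_mul_of_two_mul_le hu0 hu
    _ = q α n / q α (r K) := by simp only [u, zero_add]; field_simp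
    _ ≤ (1 / 2) ^ W := by
        rw [one_div_pow, div_le_div_iff₀ hqK (by positivity)]
        linarith

theorem sum_norm_coe_q_mul_scaledθ_le (hG : ∀ n, G α n ∈ Set.Ioo (0 : ℝ) 1)
    (hr : IsLacunary α r) {n K W : ℕ} (h : ∀ k < K, r k + 2 * W ≤ n) :
    ∑ k ∈ Finset.range K, ‖((q α n * scaledθ α (r k) : ℝ) : Circle1)‖ ≤ (1 / 2) ^ W := by
  obtain _ | J := K
  · simp
  have hT := T_pos hG n
  have hgeom : ∀ k, 2 * (q α (r k + 1) * T α n / 2) ≤ q α (r (k + 1) + 1) * T α n / 2 := by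
    intro k
    have : (2 * q α (r k + 1) : ℝ) ≤ q α (r (k + 1) + 1) := by
      exact_mod_cast two_mul_q_le_of_add_two_le hG (by linarith [hr.add_eight_le k])
    nlinarith
  have hgrowth : (2 ^ W * q α (r J + 1) : ℝ) ≤ q α (n + 1) := by
    exact_mod_cast (two_pow_mul_q_le hG W _).trans (q_mono hG (by linarith [h J J.lt_succ_self]))
  calc ∑ k ∈ Finset.range (J + 1), ‖((q α n * scaledθ α (r k) : ℝ) : Circle1)‖
      ≤ ∑ k ∈ Finset.range (J + 1), q α (r k + 1) * T α n / 2 :=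
        Finset.sum_le_sum fun k _ => norm_coe_q_mul_scaledθ_le hG n (r k)
    _ ≤ 2 * (q α (r J + 1) * T α n / 2) :=
        sum_range_succ_le_two_mul_of_two_mul_le (by positivity) hgeom J
    _ ≤ (1 / 2) ^ W * (q α (n + 1) * T α n) := by
        rw [one_div_pow, one_div_mul_eq_div, le_div_iff₀ (by positivity)]
        nlinarith
    _ ≤ (1 / 2) ^ W := mul_le_of_le_one_right (by positivity) (q_succ_mul_T_lt_one hG n).le

theorem q_smul_coe_beta (hG : ∀ n, G α n ∈ Set.Ioo (0 : ℝ) 1) (hr : IsLacunary α r) (n K : ℕ) :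
    (q α n : ℤ) • ((beta α r : ℝ) : Circle1) =
      ∑ k ∈ Finset.range K, ((q α n * scaledθ α (r k) : ℝ) : Circle1)
        + ((∑' k, q α n * scaledθ α (r (k + K)) : ℝ) : Circle1) := by
  rw [← AddCircle.coe_zsmul, zsmul_eq_mul, Int.cast_natCast, beta, ← tsum_mul_left,
    ← ((hr.summable_scaledθ hG).mul_left _).sum_add_tsum_nat_add K, AddCircle.coe_add]
  congr 1
  exact QuotientAddGroup.mk_sum _ _

theorem norm_q_smul_coe_beta_le (hG : ∀ n, G α n ∈ Set.Ioo (0 : ℝ) 1) (hr : IsLacunary α r)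
    {n W : ℕ} (h : ∀ k, r k + 2 * W < n ∨ n + 2 * W < r k) :
    ‖(q α n : ℤ) • ((beta α r : ℝ) : Circle1)‖ ≤ 2 * (1 / 2) ^ W := by
  have hex : ∃ k, n ≤ r k := ⟨n, Nat.lt_two_pow_self.le.trans (hr.two_pow_le n)⟩
  have hhead : ∀ k < Nat.find hex, r k + 2 * W ≤ n := fun k hk => by
    have := Nat.find_min hex hk; have := h k; omega
  have htail : n + 2 * W ≤ r (Nat.find hex) := by
    have := Nat.find_spec hex; have := h (Nat.find hex); omega
  rw [hr.q_smul_coe_beta hG n (Nat.find hex), two_mul]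
  exact (norm_add_le _ _).trans (add_le_add
    ((norm_sum_le _ _).trans (hr.sum_norm_coe_q_mul_scaledθ_le hG hhead))
    ((norm_coe_le_abs _).trans (hr.abs_tsum_q_mul_scaledθ_le hG htail)))

theorem quarter_le_norm_q_smul_coe_beta (hG : ∀ n, G α n ∈ Set.Ioo (0 : ℝ) 1)
    (hr : IsLacunary α r) (j : ℕ) :
    1 / 4 ≤ ‖(q α (r j) : ℤ) • ((beta α r : ℝ) : Circle1)‖ := by
  rw [hr.q_smul_coe_beta hG (r j) (j + 1), Finset.sum_range_succ]
  set head := ∑ k ∈ Finset.range j, ((q α (r j) * scaledθ α (r k) : ℝ) : Circle1)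
  set spike := ((q α (r j) * scaledθ α (r j) : ℝ) : Circle1)
  set tail := ((∑' k, q α (r j) * scaledθ α (r (k + (j + 1))) : ℝ) : Circle1)
  have hhead : ‖head‖ ≤ (1 / 2) ^ 4 := (norm_sum_le _ _).trans
    (hr.sum_norm_coe_q_mul_scaledθ_le hG fun k hk => hr.add_eight_le_of_lt hk)
  have htail : ‖tail‖ ≤ (1 / 2) ^ 4 :=
    (norm_coe_le_abs _).trans (hr.abs_tsum_q_mul_scaledθ_le hG (hr.add_eight_le j))
  have hspike : 3 / 8 ≤ ‖spike‖ := three_eighths_le_norm_coe_q_mul_scaledθ hG (hr.ten_le_a j)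
  have : ‖spike‖ ≤ ‖head + spike + tail‖ + ‖head‖ + ‖tail‖ :=
    calc ‖spike‖ = ‖head + spike + tail - head - tail‖ := by congr 1; abel
      _ ≤ _ := (norm_sub_le _ _).trans (add_le_add_left (norm_sub_le _ _) _)
  norm_num at hhead htail
  linarith

end IsLacunary

end CF

/-- **Theorem 2.5.** For irrational `α` with unbounded partial quotients,
`t^s_(qₙ)(𝕋)` strictly contains `t_(qₙ)(𝕋)`. -/
theorem stmt_6 (α : ℝ) (hα : α ∈ Set.Ioo (0 : ℝ) 1) (hirr : Irrational α)
    (hunb : ∀ M : ℕ, ∃ n : ℕ, M < a α n) :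
    ∃ β : Circle1, β ∈ statCharSet (fun n => (q α n : ℤ)) ∧
      β ∉ charSet (fun n => (q α n : ℤ)) := by
  have hG := G_mem_Ioo hα hirr
  obtain ⟨r, hr⟩ := exists_isLacunary hunb
  refine ⟨beta α r, fun ε hε => ?_, fun hconv => ?_⟩
  · obtain ⟨W, hW⟩ : ∃ W : ℕ, 2 * (1 / 2 : ℝ) ^ W < ε :=
      ((tendsto_pow_atTop_nhds_zero_of_lt_one (by norm_num) (by norm_num)).const_mul 2
        |>.eventually (gt_mem_nhds (by simpa using hε))).exists
    refine (densityZero_iUnion_Icc hr.two_pow_le (2 * W)).mono fun n hn => ?_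
    by_contra hnear
    simp only [Set.mem_iUnion, Set.mem_Icc, not_exists, not_and_or, not_le] at hnear
    have hfar : ∀ k, r k + 2 * W < n ∨ n + 2 * W < r k := fun k => by have := hnear k; omega
    exact ((hr.norm_q_smul_coe_beta_le hG hfar).trans_lt hW).not_ge hn
  · have hlim : Tendsto (fun n => ‖(q α n : ℤ) • ((beta α r : ℝ) : Circle1)‖) atTop (𝓝 0) := by
      simpa using hconv.norm
    obtain ⟨j, hj⟩ := ((hlim.comp hr.strictMono.tendsto_atTop).eventually
      (gt_mem_nhds (by norm_num : (0 : ℝ) < 1 / 4))).exists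
    exact hj.not_ge (hr.quarter_le_norm_q_smul_coe_beta hG j)
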